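/- arXiv:1907.11913 — 3 statements merged into one kernel-verified Lean document; each statement's English description precedes it below -/
import Mathlib

section
/- The elliptical saturation function satisfies its limits componentwise on the saturation boundary: if ‖v‖ ≥ g(v), then the output w = E_s(v, v_max) satisfies Σᵢ (wᵢ/(v_max)ᵢ)² = 1, and in all cases Σᵢ (E_s(v,v_max)ᵢ/(v_max)ᵢ)² ≤ max(1, Σᵢ (vᵢ/(v_max)ᵢ)²) with the saturated output always lying inside or on the ellipsoid {w : Σᵢ (wᵢ/(v_max)ᵢ)² ≤ 1} whenever saturation is active. -/
open scoped BigOperators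

/-- The function `g` appearing in the elliptical saturation function. -/
noncomputable def ellipG {m : ℕ} (v vmax : EuclideanSpace ℝ (Fin m)) : ℝ :=
  1 / Real.sqrt (∑ i, ((v i / ‖v‖) / vmax i) ^ 2)

/-- The elliptical saturation function `E_s(v, v_max)`. -/
noncomputable def ellipSat {m : ℕ} (v vmax : EuclideanSpace ℝ (Fin m)) :
    EuclideanSpace ℝ (Fin m) :=
  if ‖v‖ < ellipG v vmax then v else (ellipG v vmax / ‖v‖) • v

lemma ellipSat_key {m : ℕ} (v vmax : EuclideanSpace ℝ (Fin m))
    (hv : v ≠ 0) (hvmax : ∀ i, 0 < vmax i) (hle : ellipG v vmax ≤ ‖v‖) :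
    ∑ i, (ellipSat v vmax i / vmax i) ^ 2 = 1 := by
  have hnv : (0:ℝ) < ‖v‖ := norm_pos_iff.mpr hv
  set S := ∑ i, ((v i / ‖v‖) / vmax i) ^ 2 with hS
  have hSpos : 0 < S := by
    obtain ⟨j, hj⟩ : ∃ j, v j ≠ 0 := by
      by_contra h
      push_neg at h
      exact hv (by ext i; exact h i)
    apply Finset.sum_pos' (fun i _ => sq_nonneg _)
    refine ⟨j, Finset.mem_univ j, ?_⟩
    have h1 := hvmax j
    positivity
  have hsqrt : Real.sqrt S ≠ 0 := (Real.sqrt_pos.mpr hSpos).ne'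
  have hg : ellipG v vmax ^ 2 = 1 / S := by
    rw [ellipG, div_pow, one_pow, Real.sq_sqrt hSpos.le]
  rw [ellipSat, if_neg (not_lt.mpr hle)]
  have : ∀ i, ((ellipG v vmax / ‖v‖) • v) i / vmax i
      = ellipG v vmax * ((v i / ‖v‖) / vmax i) := by
    intro i
    simp [PiLp.smul_apply, smul_eq_mul]
    ring
  simp_rw [this, mul_pow, ← Finset.mul_sum, hg, ← hS]
  field_simp

/-- On the saturation boundary the output satisfies the ellipsoid equation, and in
all cases the saturated output lies within the larger of the unit ellipsoid and
the ellipsoid through `v`; when saturation is active the output lies inside or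
on the unit ellipsoid. -/
theorem ellipSat_ellipsoid {m : ℕ} (v vmax : EuclideanSpace ℝ (Fin m))
    (hv : v ≠ 0) (hvmax : ∀ i, 0 < vmax i) :
    (ellipG v vmax ≤ ‖v‖ → ∑ i, (ellipSat v vmax i / vmax i) ^ 2 = 1) ∧
    (∑ i, (ellipSat v vmax i / vmax i) ^ 2 ≤ max 1 (∑ i, (v i / vmax i) ^ 2)) ∧
    (ellipG v vmax ≤ ‖v‖ → ∑ i, (ellipSat v vmax i / vmax i) ^ 2 ≤ 1) := by
  refine ⟨fun h => ellipSat_key v vmax hv hvmax h, ?_, fun h =>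
    (ellipSat_key v vmax hv hvmax h).le⟩
  by_cases h : ‖v‖ < ellipG v vmax
  · rw [ellipSat, if_pos h]
    exact le_max_right _ _
  · rw [ellipSat_key v vmax hv hvmax (not_lt.mp h)]
    exact le_max_left _ _
end

section
/- For the error dynamics ė = A e + B Λ Ω̃ᵀ(t) ξ(t) − B Ω̃_Δᵀ(t) ξ_Δ(t) with A Hurwitz admitting P = Pᵀ > 0 satisfying AᵀP + PA = −Q < 0 and PB = CᵀSᵀ, the adaptive laws Ω̇ = −Γ_Ω ξ (S C e)ᵀ and Ω̇_Δ = Γ_Δ ξ_Δ (S C e)ᵀ (with Γ_Ω, Γ_Δ symmetric positive definite, Λ diagonal positive definite constant) make V = eᵀPe + tr(Ω̃ᵀΓ_Ω^{-1}Ω̃ Λ) + tr(Ω̃_ΔᵀΓ_Δ^{-1}Ω̃_Δ) satisfy V̇ = −eᵀQe ≤ 0 along trajectories. -/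
/-!
With `w = S C e`, the identities `AᵀP + PA = -Q` and `P B = (S C)ᵀ` turn the derivative of
`eᵀ P e` along the error dynamics into `-eᵀ Q e + 2 wᵀ Λ Ω̃ᵀ ξ - 2 wᵀ Ω̃_Δᵀ ξ_Δ`.
Vectorising, `tr (Xᵀ G X L) = vec Xᵀ (Lᵀ ⊗ G) vec X`, so for symmetric `G` and `L` each trace
term of `V` is a quadratic form with derivative `2 tr (Xᵀ G Ẋ L)`. The adaptive laws make `Ω̃̇`
the rank-one matrix `∓ Γ ξ wᵀ`, whose factor `Γ` is cancelled by `G = Γ⁻¹`; the two trace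
derivatives are then `-2 wᵀ Λ Ω̃ᵀ ξ` and `2 wᵀ Ω̃_Δᵀ ξ_Δ`, which cancel the cross terms.
-/

open Matrix
open scoped Kronecker

section Calculus

variable {𝕜 : Type*} [NontriviallyNormedField 𝕜] {ι : Type*} [Fintype ι]
  {f g : 𝕜 → ι → 𝕜} {f' g' : ι → 𝕜} {t : 𝕜}

theorem HasDerivAt.dotProduct (hf : HasDerivAt f f' t) (hg : HasDerivAt g g' t) :
    HasDerivAt (fun s => f s ⬝ᵥ g s) (f' ⬝ᵥ g t + f t ⬝ᵥ g') t := by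
  simp only [_root_.dotProduct, ← Finset.sum_add_distrib]
  exact HasDerivAt.fun_sum fun i _ => (hasDerivAt_pi.1 hf i).mul (hasDerivAt_pi.1 hg i)

theorem HasDerivAt.const_mulVec {κ : Type*} (M : Matrix κ ι 𝕜) (hf : HasDerivAt f f' t) :
    HasDerivAt (fun s => M *ᵥ f s) (M *ᵥ f') t :=
  hasDerivAt_pi.2 fun i =>
    ((hasDerivAt_const t (M i)).dotProduct hf).congr_deriv (by simp [mulVec])

theorem HasDerivAt.dotProduct_mulVec_self {M : Matrix ι ι 𝕜} (hM : M.IsSymm)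
    (hf : HasDerivAt f f' t) :
    HasDerivAt (fun s => f s ⬝ᵥ M *ᵥ f s) (2 * (f t ⬝ᵥ M *ᵥ f')) t := by
  convert hf.dotProduct (hf.const_mulVec M) using 1
  rw [dotProduct_mulVec, dotProduct_comm, ← mulVec_transpose, hM.eq, two_mul]

theorem hasDerivAt_vec {m n : Type*} [Fintype m] [Fintype n] {X : 𝕜 → Matrix m n 𝕜}
    {X' : Matrix m n 𝕜} (h : ∀ i j, HasDerivAt (fun s => X s i j) (X' i j) t) :
    HasDerivAt (fun s => vec (X s)) (vec X') t :=
  hasDerivAt_pi.2 fun ji => h ji.2 ji.1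

end Calculus

namespace Matrix

theorem IsSymm.kronecker {R m n : Type*} [Mul R] {G : Matrix m m R} {L : Matrix n n R}
    (hL : L.IsSymm) (hG : G.IsSymm) : (L ⊗ₖ G).IsSymm := by
  rw [IsSymm, ← kroneckerMap_transpose, hL.eq, hG.eq]

variable {R : Type*} [CommRing R] {m n : Type*} [Fintype m] [Fintype n]

theorem trace_transpose_mul_mul_mul_eq_vec_dotProduct (X Y : Matrix m n R) (G : Matrix m m R)
    (L : Matrix n n R) : (Xᵀ * G * Y * L).trace = vec X ⬝ᵥ (Lᵀ ⊗ₖ G) *ᵥ vec Y := by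
  rw [kronecker_mulVec_vec, transpose_transpose, vec_dotProduct_vec]
  simp only [Matrix.mul_assoc]

theorem IsSymm.two_mul_dotProduct_mul_mulVec_self {P : Matrix n n R} (hP : P.IsSymm)
    (A : Matrix n n R) (x : n → R) :
    2 * (x ⬝ᵥ (P * A) *ᵥ x) = x ⬝ᵥ (Aᵀ * P + P * A) *ᵥ x := by
  rw [add_mulVec, dotProduct_add, two_mul, ← mulVec_mulVec, ← mulVec_mulVec,
    dotProduct_mulVec x Aᵀ, vecMul_transpose, dotProduct_comm, dotProduct_mulVec,
    ← mulVec_transpose, hP.eq]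

theorem dotProduct_mulVec_mulVec_of_mul_eq_transpose {P : Matrix n n R} {B : Matrix n m R}
    {K : Matrix m n R} (h : P * B = Kᵀ) (x : n → R) (v : m → R) :
    x ⬝ᵥ P *ᵥ (B *ᵥ v) = K *ᵥ x ⬝ᵥ v := by
  rw [mulVec_mulVec, h, dotProduct_mulVec, vecMul_transpose]

theorem trace_transpose_mul_inv_mul_vecMulVec_mulVec_mul {k : Type*} [Fintype k]
    [DecidableEq k] (X : Matrix k n R) {Γ : Matrix k k R} (hΓ : IsUnit Γ.det)
    (Λ : Matrix n n R) (u : k → R) (w : n → R) :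
    (Xᵀ * Γ⁻¹ * vecMulVec (Γ *ᵥ u) w * Λ).trace = w ⬝ᵥ (Λ * Xᵀ) *ᵥ u := by
  rw [Matrix.mul_assoc Xᵀ, mul_vecMulVec, mulVec_mulVec, nonsing_inv_mul _ hΓ, one_mulVec,
    trace_mul_comm, ← Matrix.mul_assoc, mul_vecMulVec, trace_vecMulVec, dotProduct_comm]

end Matrix

theorem hasDerivAt_trace_transpose_mul_mul_mul {𝕜 : Type*} [NontriviallyNormedField 𝕜]
    {m n : Type*} [Fintype m] [Fintype n] {G : Matrix m m 𝕜} {L : Matrix n n 𝕜}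
    (hG : G.IsSymm) (hL : L.IsSymm) {X : 𝕜 → Matrix m n 𝕜} {X' : Matrix m n 𝕜} {t : 𝕜}
    (h : ∀ i j, HasDerivAt (fun s => X s i j) (X' i j) t) :
    HasDerivAt (fun s => ((X s)ᵀ * G * X s * L).trace) (2 * ((X t)ᵀ * G * X' * L).trace) t := by
  simp only [trace_transpose_mul_mul_mul_eq_vec_dotProduct]
  exact (hasDerivAt_vec h).dotProduct_mulVec_self (hL.transpose.kronecker hG)

theorem lyapunov_derivative_general {n m p k : ℕ}
    (A : Matrix (Fin n) (Fin n) ℝ) (B : Matrix (Fin n) (Fin m) ℝ)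
    (C : Matrix (Fin p) (Fin n) ℝ) (S : Matrix (Fin m) (Fin p) ℝ)
    (P Q : Matrix (Fin n) (Fin n) ℝ) (Λ : Matrix (Fin m) (Fin m) ℝ)
    (ΓΩ ΓΔ : Matrix (Fin k) (Fin k) ℝ)
    (hPsym : P.IsSymm) (hQ : Q.PosDef)
    (hLyap : Aᵀ * P + P * A = -Q) (hPB : P * B = Cᵀ * Sᵀ)
    (hΛdiag : Λ.IsDiag)
    (hΓΩ : ΓΩ.PosDef) (hΓΩsym : ΓΩ.IsSymm)
    (hΓΔ : ΓΔ.PosDef) (hΓΔsym : ΓΔ.IsSymm)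
    (e : ℝ → Fin n → ℝ) (ξ ξΔ : ℝ → Fin k → ℝ)
    (Ωt ΩΔt : ℝ → Matrix (Fin k) (Fin m) ℝ)
    (he : ∀ t, HasDerivAt e
        (A.mulVec (e t) + B.mulVec ((Λ * (Ωt t)ᵀ).mulVec (ξ t))
          - B.mulVec ((ΩΔt t)ᵀ.mulVec (ξΔ t))) t)
    (hΩ : ∀ i j t, HasDerivAt (fun s => Ωt s i j)
        (-(ΓΩ.mulVec (ξ t) i * (S * C).mulVec (e t) j)) t)
    (hΩΔ : ∀ i j t, HasDerivAt (fun s => ΩΔt s i j)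
        (ΓΔ.mulVec (ξΔ t) i * (S * C).mulVec (e t) j) t)
    (V : ℝ → ℝ)
    (hV : ∀ t, V t = e t ⬝ᵥ P.mulVec (e t)
        + ((Ωt t)ᵀ * ΓΩ⁻¹ * Ωt t * Λ).trace
        + ((ΩΔt t)ᵀ * ΓΔ⁻¹ * ΩΔt t).trace) :
    ∀ t, HasDerivAt V (-(e t ⬝ᵥ Q.mulVec (e t))) t ∧
      -(e t ⬝ᵥ Q.mulVec (e t)) ≤ 0 := by
  intro t
  refine ⟨?_, neg_nonpos.2 (by simpa using hQ.posSemidef.dotProduct_mulVec_nonneg (e t))⟩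
  have hPB' : P * B = (S * C)ᵀ := by rw [transpose_mul, hPB]
  have heterm := (he t).dotProduct_mulVec_self hPsym
  have hΩterm := hasDerivAt_trace_transpose_mul_mul_mul hΓΩsym.inv hΛdiag.isSymm
    (X' := -vecMulVec (ΓΩ *ᵥ ξ t) ((S * C) *ᵥ e t)) (hΩ · · t)
  have hΩΔterm := hasDerivAt_trace_transpose_mul_mul_mul hΓΔsym.inv isSymm_one
    (X' := vecMulVec (ΓΔ *ᵥ ξΔ t) ((S * C) *ᵥ e t)) (hΩΔ · · t)
  refine (((heterm.add hΩterm).add hΩΔterm).congr_deriv ?_).congr_of_eventuallyEq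
    (.of_forall fun s => by simp only [hV s, Pi.add_apply, Matrix.mul_one])
  rw [mulVec_sub, mulVec_add, dotProduct_sub, dotProduct_add, mul_sub, mul_add,
    mulVec_mulVec, hPsym.two_mul_dotProduct_mul_mulVec_self, hLyap, neg_mulVec, dotProduct_neg,
    dotProduct_mulVec_mulVec_of_mul_eq_transpose hPB',
    dotProduct_mulVec_mulVec_of_mul_eq_transpose hPB',
    Matrix.mul_neg, Matrix.neg_mul, trace_neg,
    trace_transpose_mul_inv_mul_vecMulVec_mulVec_mul _ hΓΩ.det_pos.ne'.isUnit,
    trace_transpose_mul_inv_mul_vecMulVec_mulVec_mul _ hΓΔ.det_pos.ne'.isUnit,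
    Matrix.one_mul]
  ring

/-- Lyapunov derivative of the saturation-modified adaptive system: with the SPR
conditions `AᵀP + PA = −Q`, `PB = CᵀSᵀ` and the adaptive laws
`Ω̇ = −Γ_Ω ξ (SCe)ᵀ`, `Ω̇_Δ = Γ_Δ ξ_Δ (SCe)ᵀ`, the Lyapunov function
`V = eᵀPe + tr(Ω̃ᵀΓ_Ω⁻¹Ω̃Λ) + tr(Ω̃_ΔᵀΓ_Δ⁻¹Ω̃_Δ)` satisfies `V̇ = −eᵀQe ≤ 0`. -/
theorem lyapunov_derivative {n m p k : ℕ}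
    (A : Matrix (Fin n) (Fin n) ℝ) (B : Matrix (Fin n) (Fin m) ℝ)
    (C : Matrix (Fin p) (Fin n) ℝ) (S : Matrix (Fin m) (Fin p) ℝ)
    (P Q : Matrix (Fin n) (Fin n) ℝ) (Λ : Matrix (Fin m) (Fin m) ℝ)
    (ΓΩ ΓΔ : Matrix (Fin k) (Fin k) ℝ)
    (hP : P.PosDef) (hPsym : P.IsSymm) (hQ : Q.PosDef)
    (hLyap : Aᵀ * P + P * A = -Q) (hPB : P * B = Cᵀ * Sᵀ)
    (hΛdiag : Λ.IsDiag) (hΛpos : ∀ i, 0 < Λ i i)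
    (hΓΩ : ΓΩ.PosDef) (hΓΩsym : ΓΩ.IsSymm)
    (hΓΔ : ΓΔ.PosDef) (hΓΔsym : ΓΔ.IsSymm)
    (e : ℝ → Fin n → ℝ) (ξ ξΔ : ℝ → Fin k → ℝ)
    (Ωt ΩΔt : ℝ → Matrix (Fin k) (Fin m) ℝ)
    (he : ∀ t, HasDerivAt e
        (A.mulVec (e t) + B.mulVec ((Λ * (Ωt t)ᵀ).mulVec (ξ t))
          - B.mulVec ((ΩΔt t)ᵀ.mulVec (ξΔ t))) t)
    (hΩ : ∀ i j t, HasDerivAt (fun s => Ωt s i j)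
        (-(ΓΩ.mulVec (ξ t) i * (S * C).mulVec (e t) j)) t)
    (hΩΔ : ∀ i j t, HasDerivAt (fun s => ΩΔt s i j)
        (ΓΔ.mulVec (ξΔ t) i * (S * C).mulVec (e t) j) t)
    (V : ℝ → ℝ)
    (hV : ∀ t, V t = e t ⬝ᵥ P.mulVec (e t)
        + ((Ωt t)ᵀ * ΓΩ⁻¹ * Ωt t * Λ).trace
        + ((ΩΔt t)ᵀ * ΓΔ⁻¹ * ΩΔt t).trace) :
    ∀ t, HasDerivAt V (-(e t ⬝ᵥ Q.mulVec (e t))) t ∧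
      -(e t ⬝ᵥ Q.mulVec (e t)) ≤ 0 :=
  lyapunov_derivative_general A B C S P Q Λ ΓΩ ΓΔ hPsym hQ hLyap hPB hΛdiag hΓΩ hΓΩsym hΓΔ hΓΔsym e
    ξ ξΔ Ωt ΩΔt he hΩ hΩΔ V hV
end

section
/- Invariance from negative derivative on an annulus: suppose W(χ(t)) = χ(t)ᵀPχ(t) along a continuously differentiable trajectory χ, W(χ(0)) < p_min χ_max², and dW/dt < 0 whenever χ_min ≤ ‖χ(t)‖ ≤ χ_max (where ρ χ_min < χ_max with ρ = √(p_max/p_min)). Then ‖χ(t)‖ < χ_max for all t ≥ 0. -/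
open Matrix Set Filter Topology

/-- Invariance from negative derivative on an annulus: if `W(χ(0)) < p_min χ_max²`
and `Ẇ < 0` whenever `χ_min ≤ ‖χ(t)‖ ≤ χ_max` (with `ρ χ_min < χ_max`), then
`‖χ(t)‖ < χ_max` for all `t ≥ 0`. -/
theorem annulus_invariance {n : ℕ}
    (P : Matrix (Fin n) (Fin n) ℝ) (hP : P.PosDef) (hPsym : P.IsSymm)
    (pmin pmax ρ χmin χmax : ℝ)
    (hpmin : 0 < pmin)
    (hray : ∀ x : Fin n → ℝ,
      pmin * (x ⬝ᵥ x) ≤ x ⬝ᵥ P.mulVec x ∧ x ⬝ᵥ P.mulVec x ≤ pmax * (x ⬝ᵥ x))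
    (hρ : ρ = Real.sqrt (pmax / pmin))
    (hχmin : 0 < χmin) (hχmax : 0 < χmax) (hann : ρ * χmin < χmax)
    (χ χ' : ℝ → Fin n → ℝ)
    (hχ : ∀ t, HasDerivAt χ (χ' t) t) (hχ'cont : Continuous χ')
    (W W' : ℝ → ℝ)
    (hW : ∀ t, W t = χ t ⬝ᵥ P.mulVec (χ t))
    (hW' : ∀ t, HasDerivAt W (W' t) t)
    (h0 : W 0 < pmin * χmax ^ 2)
    (hdec : ∀ t, 0 ≤ t → χmin ≤ Real.sqrt (χ t ⬝ᵥ χ t) →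
      Real.sqrt (χ t ⬝ᵥ χ t) ≤ χmax → W' t < 0) :
    ∀ t, 0 ≤ t → Real.sqrt (χ t ⬝ᵥ χ t) < χmax := by
  have hdotnn : ∀ u : ℝ, 0 ≤ χ u ⬝ᵥ χ u := by
    intro u
    simpa [dotProduct] using
      Finset.sum_nonneg fun i _ => mul_self_nonneg (χ u i)
  set c := pmin * χmax ^ 2 with hc
  have hcpos : 0 < c := by positivity
  have hWcont : Continuous W := continuous_iff_continuousAt.mpr fun t => (hW' t).continuousAt
  have key : ∀ u, 0 ≤ u → W u < c := by
    intro t₀ ht₀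
    by_contra hcon
    push_neg at hcon
    set S : Set ℝ := Icc 0 t₀ ∩ W ⁻¹' (Ici c) with hS
    have hSclosed : IsClosed S := isClosed_Icc.inter (isClosed_Ici.preimage hWcont)
    have hSne : S.Nonempty := ⟨t₀, ⟨⟨ht₀, le_refl _⟩, hcon⟩⟩
    have hSbdd : BddBelow S := ⟨0, fun x hx => hx.1.1⟩
    set s := sInf S with hs
    have hsmem : s ∈ S := hSclosed.csInf_mem hSne hSbdd
    have hs0 : 0 ≤ s := hsmem.1.1
    have hsc : c ≤ W s := hsmem.2
    have hspos : 0 < s := by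
      rcases hs0.lt_or_eq with h | h
      · exact h
      · exfalso; rw [← h] at hsc; exact absurd hsc (not_le.mpr h0)
    have hlt : ∀ u, 0 ≤ u → u < s → W u < c := by
      intro u hu0 hus
      by_contra h
      push_neg at h
      have : s ≤ u := csInf_le hSbdd ⟨⟨hu0, hus.le.trans hsmem.1.2⟩, h⟩
      exact absurd hus (not_lt.mpr this)
    have hWs : W s = c := by
      refine le_antisymm ?_ hsc
      have h1 : Tendsto W (𝓝[<] s) (𝓝 (W s)) := (hWcont.tendsto s).mono_left nhdsWithin_le_nhds
      refine le_of_tendsto h1 ?_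
      filter_upwards [Ioo_mem_nhdsLT_of_mem (⟨hspos, le_refl s⟩ : s ∈ Ioc 0 s)] with u hu
      exact (hlt u hu.1.le hu.2).le
    have hderiv : 0 ≤ W' s := by
      have h2 : Tendsto (slope W s) (𝓝[Iio s \ {s}] s) (𝓝 (W' s)) :=
        hasDerivWithinAt_iff_tendsto_slope.mp ((hW' s).hasDerivWithinAt (s := Iio s))
      have hIio : Iio s \ {s} = Iio s := by
        ext x; simp (config := { contextual := true }) [lt_iff_le_and_ne]
      rw [hIio] at h2
      refine ge_of_tendsto h2 ?_
      filter_upwards [Ioo_mem_nhdsLT_of_mem (⟨hspos, le_refl s⟩ : s ∈ Ioc 0 s)] with u hu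
      have h3 : W u - W s < 0 := by
        have := hlt u hu.1.le hu.2; rw [hWs]; linarith
      have h4 : u - s < 0 := by linarith [hu.2]
      have h5 : 0 < (W u - W s) / (u - s) := div_pos_of_neg_of_neg h3 h4
      rw [slope_def_field]
      exact h5.le
    -- the state is in the annulus at time s
    set a := χ s ⬝ᵥ χ s with ha
    have ha0 : 0 ≤ a := hdotnn s
    obtain ⟨hl, hu⟩ := hray (χ s)
    rw [← hW s, hWs] at hl hu
    have hpmax : 0 < pmax := by
      by_contra h
      push_neg at h
      have : pmax * a ≤ 0 := mul_nonpos_of_nonpos_of_nonneg h ha0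
      linarith
    have hρ0 : 0 ≤ ρ := hρ ▸ Real.sqrt_nonneg _
    have hρsq : ρ ^ 2 = pmax / pmin := by
      rw [hρ, Real.sq_sqrt (div_nonneg hpmax.le hpmin.le)]
    have hsq : (ρ * χmin) ^ 2 < χmax ^ 2 :=
      pow_lt_pow_left₀ hann (by positivity) (by norm_num)
    have hkey2 : pmax * χmin ^ 2 < pmin * χmax ^ 2 := by
      have h6 : pmax / pmin * χmin ^ 2 < χmax ^ 2 := by
        have h6' := hsq; rw [mul_pow, hρsq] at h6'; exact h6'
      have h7 := mul_lt_mul_of_pos_left h6 hpmin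
      rw [show pmin * (pmax / pmin * χmin ^ 2) = pmax * χmin ^ 2 by
        field_simp] at h7
      exact h7
    have haub : a ≤ χmax ^ 2 := by nlinarith [hl]
    have halb : χmin ^ 2 ≤ a := by
      by_contra h
      push_neg at h
      nlinarith [hu, hpmax]
    have hub : Real.sqrt a ≤ χmax := by
      rw [← Real.sqrt_sq hχmax.le]
      exact Real.sqrt_le_sqrt haub
    have hlb : χmin ≤ Real.sqrt a := by
      rw [← Real.sqrt_sq hχmin.le]
      exact Real.sqrt_le_sqrt halb
    exact absurd (hdec s hs0 hlb hub) (not_lt.mpr hderiv)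
  intro t ht
  have hWt := key t ht
  obtain ⟨hl, _⟩ := hray (χ t)
  rw [← hW t] at hl
  have h7 : χ t ⬝ᵥ χ t < χmax ^ 2 := by nlinarith [hl, hWt]
  rw [← Real.sqrt_sq hχmax.le]
  exact Real.sqrt_lt_sqrt (hdotnn t) h7
end
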